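/- Let 0 < ε < 1, a = 1 − ε⁴/(1+ε²)², b = 1/ε, f(t) = (1 + a t²)/(1 + t²), g(t) = ε/(1 + (t−b)²), and h = f + g. Then h'(t) ≠ 0 for all t ≤ b/2. In particular, every critical point of h is greater than 1/(2ε), even though the unique critical point of f is at t = 0. -/

import Mathlib

/-!
Both derivatives are explicit: `f' t = 2(a-1)t/(1+t²)²` and `g' t = 2ε(b-t)/(1+(t-b)²)²`.
For `t ≤ 0` both are nonnegative and `g' t > 0`. For `0 < t ≤ b/2` we have `|f' t| < 1 - a`
because `2t < (1+t²)²`, while `g' t ≥ ε b/(1+b²)² = 1 - a`, since `2(b-t) ≥ b` and `|t-b| ≤ b`;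
the choice of `a` is exactly the one making the last equality hold when `b = 1/ε`.
-/

theorem hasDerivAt_one_add_mul_sq_div_one_add_sq (a t : ℝ) :
    HasDerivAt (fun t => (1 + a * t ^ 2) / (1 + t ^ 2)) (2 * (a - 1) * t / (1 + t ^ 2) ^ 2) t := by
  have hnum : HasDerivAt (fun t : ℝ => 1 + a * t ^ 2) (a * (2 * t)) t := by
    simpa using ((hasDerivAt_pow 2 t).const_mul a).const_add 1
  have hden : HasDerivAt (fun t : ℝ => 1 + t ^ 2) (2 * t) t := by
    simpa using (hasDerivAt_pow 2 t).const_add 1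
  refine (hnum.div hden (by positivity)).congr_deriv ?_
  ring

theorem hasDerivAt_div_one_add_sub_sq (c b t : ℝ) :
    HasDerivAt (fun t => c / (1 + (t - b) ^ 2)) (2 * c * (b - t) / (1 + (t - b) ^ 2) ^ 2) t := by
  have hden : HasDerivAt (fun t : ℝ => 1 + (t - b) ^ 2) (2 * (t - b)) t := by
    simpa using (((hasDerivAt_id t).sub_const b).pow 2).const_add 1
  refine ((hasDerivAt_const t c).div hden (by positivity)).congr_deriv ?_
  ring

theorem two_mul_div_one_add_sq_sq_lt_one (t : ℝ) : 2 * t / (1 + t ^ 2) ^ 2 < 1 := by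
  rw [div_lt_one (by positivity)]
  nlinarith [sq_nonneg (t - 1), sq_nonneg (t ^ 2)]

theorem mul_div_one_add_sq_sq_le_of_le_half {b c t : ℝ} (hc : 0 ≤ c) (ht0 : 0 ≤ t) (ht : t ≤ b / 2) :
    c * b / (1 + b ^ 2) ^ 2 ≤ 2 * c * (b - t) / (1 + (t - b) ^ 2) ^ 2 := by
  have hnum : c * b ≤ 2 * c * (b - t) := by nlinarith
  have hden : (1 + (t - b) ^ 2) ^ 2 ≤ (1 + b ^ 2) ^ 2 :=
    pow_le_pow_left₀ (by positivity) (by nlinarith) 2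
  calc c * b / (1 + b ^ 2) ^ 2 ≤ 2 * c * (b - t) / (1 + b ^ 2) ^ 2 := by gcongr
    _ ≤ 2 * c * (b - t) / (1 + (t - b) ^ 2) ^ 2 :=
      div_le_div_of_nonneg_left (by nlinarith) (by positivity) hden

theorem perturbed_derivative_pos_of_le_half {a b c t : ℝ} (ha : 0 < 1 - a)
    (habc : 1 - a ≤ c * b / (1 + b ^ 2) ^ 2) (hb : 0 < b) (hc : 0 < c) (ht : t ≤ b / 2) :
    0 < 2 * (a - 1) * t / (1 + t ^ 2) ^ 2 + 2 * c * (b - t) / (1 + (t - b) ^ 2) ^ 2 := by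
  rcases le_or_gt t 0 with ht0 | ht0
  · have hf : 0 ≤ 2 * (a - 1) * t / (1 + t ^ 2) ^ 2 := div_nonneg (by nlinarith) (by positivity)
    have hg : 0 < 2 * c * (b - t) / (1 + (t - b) ^ 2) ^ 2 :=
      div_pos (by nlinarith) (by positivity)
    linarith
  · have hf : -(1 - a) < 2 * (a - 1) * t / (1 + t ^ 2) ^ 2 := by
      have := mul_lt_mul_of_pos_left (two_mul_div_one_add_sq_sq_lt_one t) ha
      rw [show 2 * (a - 1) * t / (1 + t ^ 2) ^ 2 = -((1 - a) * (2 * t / (1 + t ^ 2) ^ 2)) by ring]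
      linarith
    linarith [mul_div_one_add_sq_sq_le_of_le_half hc.le ht0.le ht]

theorem two_mul_sub_one_mul_div_eq_zero_iff {a t : ℝ} (ha : a ≠ 1) :
    2 * (a - 1) * t / (1 + t ^ 2) ^ 2 = 0 ↔ t = 0 := by
  have hden : (1 + t ^ 2) ^ 2 ≠ 0 := by positivity
  simp [hden, sub_eq_zero, ha]

theorem stmt_5_general (ε : ℝ) (hε0 : 0 < ε)
    (a b : ℝ) (ha : a = 1 - ε ^ 4 / (1 + ε ^ 2) ^ 2) (hb : b = 1 / ε)
    (f g h : ℝ → ℝ)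
    (hf : ∀ t, f t = (1 + a * t ^ 2) / (1 + t ^ 2))
    (hg : ∀ t, g t = ε / (1 + (t - b) ^ 2))
    (hh : h = f + g) :
    (∀ t, t ≤ b / 2 → deriv h t ≠ 0) ∧
    (∀ t, deriv h t = 0 → 1 / (2 * ε) < t) ∧
    (∀ t, deriv f t = 0 ↔ t = 0) := by
  have hf' (t : ℝ) := (funext hf ▸ hasDerivAt_one_add_mul_sq_div_one_add_sq a t :)
  have hg' (t : ℝ) := (funext hg ▸ hasDerivAt_div_one_add_sub_sq ε b t :)
  have h1a : 1 - a = ε * b / (1 + b ^ 2) ^ 2 := by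
    subst ha hb
    field_simp
    ring
  have h1a_pos : 0 < 1 - a := by rw [ha]; ring_nf; positivity
  have hpos (t : ℝ) (ht : t ≤ b / 2) : 0 < deriv h t := by
    rw [hh, ((hf' t).add (hg' t)).deriv]
    exact perturbed_derivative_pos_of_le_half h1a_pos h1a.le (by rw [hb]; positivity) hε0 ht
  have hhalf : 1 / (2 * ε) = b / 2 := by rw [hb]; ring
  refine ⟨fun t ht => (hpos t ht).ne', fun t hdt => ?_, fun t => ?_⟩
  · by_contra! ht
    exact (hpos t (hhalf ▸ ht)).ne' hdt
  · rw [(hf' t).deriv]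
    exact two_mul_sub_one_mul_div_eq_zero_iff (by linarith)

theorem stmt_5 (ε : ℝ) (hε0 : 0 < ε) (hε1 : ε < 1)
    (a b : ℝ) (ha : a = 1 - ε ^ 4 / (1 + ε ^ 2) ^ 2) (hb : b = 1 / ε)
    (f g h : ℝ → ℝ)
    (hf : ∀ t, f t = (1 + a * t ^ 2) / (1 + t ^ 2))
    (hg : ∀ t, g t = ε / (1 + (t - b) ^ 2))
    (hh : h = f + g) :
    (∀ t, t ≤ b / 2 → deriv h t ≠ 0) ∧
    (∀ t, deriv h t = 0 → 1 / (2 * ε) < t) ∧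
    (∀ t, deriv f t = 0 ↔ t = 0) :=
  stmt_5_general ε hε0 a b ha hb f g h hf hg hh
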